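/- arXiv:2308.00656 — 4 statements merged into one kernel-verified Lean document; each statement's English description precedes it below -/
import Mathlib

section
/- Let F : 𝒞 ⥤ 𝒟 be a lax symmetric monoidal functor, l and r lists of objects of 𝒞, and a, b objects of 𝒞. Then the iterated structure map intertwines the adjacent-swap coherence isomorphisms: Θ_{l.map F, F(a), F(b), r.map F} ≫ ξ(l ++ [b,a] ++ r) = ξ(l ++ [a,b] ++ r) ≫ F(Θ_{l,a,b,r}), as morphisms T((l ++ [a,b] ++ r).map F) ⟶ F(T(l ++ [b,a] ++ r)). -/
open CategoryTheory Category MonoidalCategory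

universe v v' v'' u u' u''

namespace Paper

variable {C : Type u} [Category.{v} C] [MonoidalCategory C]

/-- The left-normalized tensor product of a list of objects:
`T [] = 𝟙_ C`, `T [x] = x`, and `T (l ++ [x]) = T l ⊗ x` for `l` nonempty. -/
def T : List C → C
  | [] => 𝟙_ C
  | x :: l => l.foldl (fun a b => a ⊗ b) x

@[simp] lemma T_nil : T ([] : List C) = 𝟙_ C := rfl
@[simp] lemma T_singleton (x : C) : T [x] = x := rfl

lemma T_concat (x : C) (l : List C) (y : C) :
    T (x :: l ++ [y]) = T (x :: l) ⊗ y := by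
  simp [T, List.foldl_append]

lemma T_concat' {l : List C} (h : l ≠ []) (y : C) :
    T (l ++ [y]) = T l ⊗ y := by
  cases l with
  | nil => exact absurd rfl h
  | cons x l => exact T_concat x l y

lemma T_concat2 (x : C) (l : List C) (a b : C) :
    T (x :: l ++ [a, b]) = (T (x :: l) ⊗ a) ⊗ b := by
  simp [T, List.foldl_append]

/-- Auxiliary definition for the splitting isomorphism, in the case where the
first list is nonempty:  for nonempty `xs`, `splitIso xs [y] = 𝟙` and
`splitIso xs (l ++ [y]) = (splitIso xs l ⊗ 𝟙 y) ≫ α` for `l` nonempty. -/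
def splitIsoAux (x : C) (xs' : List C) :
    (ys : List C) → (T ((x :: xs') ++ ys) ≅ T (x :: xs') ⊗ T ys) := fun ys =>
  ys.reverseRecOn
    (eqToIso (by rw [List.append_nil]) ≪≫ (ρ_ (T (x :: xs'))).symm)
    (fun l y ih =>
      match l, ih with
      | [], _ => eqToIso (T_concat x xs' y)
      | a :: l', ih =>
          eqToIso (by rw [← List.append_assoc]; exact T_concat' (by simp) y) ≪≫
            whiskerRightIso ih y ≪≫ α_ (T (x :: xs')) (T (a :: l')) y ≪≫
            whiskerLeftIso (T (x :: xs')) (eqToIso (T_concat a l' y).symm))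

/-- The splitting isomorphism `φ_{xs,ys} : T (xs ++ ys) ≅ T xs ⊗ T ys`, defined by the
clauses (in order of priority): `φ_{xs,[]} = (ρ_ (T xs)).symm`, `φ_{[],ys} = (λ_ (T ys)).symm`,
`φ_{xs,[y]} = 𝟙` for `xs` nonempty, and
`φ_{xs,l++[y]} = (φ_{xs,l} ⊗ 𝟙 y) ≫ α_ (T xs) (T l) y` for `xs`, `l` nonempty. -/
def splitIso : (xs ys : List C) → (T (xs ++ ys) ≅ T xs ⊗ T ys)
  | xs, [] => eqToIso (by rw [List.append_nil]) ≪≫ (ρ_ (T xs)).symm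
  | [], y :: ys' => (λ_ (T (y :: ys'))).symm
  | x :: xs', y :: ys' => splitIsoAux x xs' (y :: ys')

/-- The left-normalized tensor product of a componentwise family of morphisms,
encoded as a list of arrows:  `Tmor [] = 𝟙 (𝟙_ C)`, `Tmor [f] = f.hom`, and
`Tmor (l ++ [f]) = Tmor l ⊗ f.hom` for `l` nonempty. -/
def Tmor : (fs : List (Arrow C)) → (T (fs.map Comma.left) ⟶ T (fs.map Comma.right)) := fun fs =>
  fs.reverseRecOn
    (𝟙 (𝟙_ C))
    (fun l f ih =>
      match l, ih with
      | [], _ => f.hom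
      | a :: l', ih =>
          eqToHom (by erw [List.map_append]; exact T_concat' (List.cons_ne_nil _ _) _) ≫
            (ih ⊗ₘ f.hom) ≫
            eqToHom (by erw [List.map_append]; exact (T_concat' (List.cons_ne_nil _ _) _).symm))

/-- The regrouping isomorphism `Φ(xss) : T (xss.flatten) ⟶ T (xss.map T)` defined by
`Φ([]) = 𝟙` and `Φ(xss ++ [v]) = φ_{xss.flatten,v} ≫ (Φ(xss) ⊗ 𝟙) ≫ (φ_{xss.map T,[T v]})⁻¹`. -/
def Phi : (xss : List (List C)) → (T xss.flatten ⟶ T (xss.map T)) := fun xss =>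
  xss.reverseRecOn
    (𝟙 (𝟙_ C))
    (fun l v ih =>
      eqToHom (congrArg T (by simp)) ≫
        (splitIso l.flatten v).hom ≫
        (ih ⊗ₘ 𝟙 (T v)) ≫
        (splitIso (l.map T) [T v]).inv ≫
        eqToHom (congrArg T (by simp)))

/-- A multimorphism: a list of source objects together with a morphism out of their
left-normalized tensor product into a target object. -/
structure MultiMor (C : Type u) [Category.{v} C] [MonoidalCategory C] where
  src : List C
  tgt : C
  hom : T src ⟶ tgt

/-- The multicomposition `Γ(g; ⟨f_s⟩) = Φ(xss) ≫ Tmor ⟨f_s⟩ ≫ g` of the underlying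
multicategory of a monoidal category (for the left-normalized bracketing). -/
def Gamma {z : C} (fs : List (MultiMor C)) (g : T (fs.map MultiMor.tgt) ⟶ z) :
    T ((fs.map MultiMor.src).flatten) ⟶ z :=
  Phi (fs.map MultiMor.src) ≫
    eqToHom (congrArg T (by erw [List.map_map, List.map_map]; exact rfl)) ≫
    Tmor (fs.map fun m => Arrow.mk m.hom) ≫
    eqToHom (congrArg T (by erw [List.map_map]; exact rfl)) ≫ g

section LaxPart
open Functor.LaxMonoidal

variable {C : Type u} [Category.{v} C] [MonoidalCategory C]
variable {D : Type u'} [Category.{v'} D] [MonoidalCategory D]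

/-- The iterated structure map `ξ(xs) : T (xs.map F.obj) ⟶ F.obj (T xs)` of a lax
monoidal functor, defined by `ξ([]) = ε`, `ξ([x]) = 𝟙`, and
`ξ(l ++ [x]) = (ξ(l) ⊗ 𝟙) ≫ μ F (T l) x` for `l` nonempty. -/
def xi (F : C ⥤ D) [F.LaxMonoidal] :
    (xs : List C) → (T (xs.map F.obj) ⟶ F.obj (T xs)) := fun xs =>
  xs.reverseRecOn
    (ε F)
    (fun l x ih =>
      match l, ih with
      | [], _ => 𝟙 (F.obj x)
      | a :: l', ih =>
          eqToHom (by rw [List.map_append]; exact T_concat' (by simp) (F.obj x)) ≫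
            (ih ⊗ₘ 𝟙 (F.obj x)) ≫ μ F (T (a :: l')) x ≫
            eqToHom (congrArg F.obj (T_concat a l' x).symm))

end LaxPart

section BraidedPart

variable {C : Type u} [Category.{v} C] [MonoidalCategory C] [BraidedCategory C]

/-- The adjacent-swap coherence isomorphism
`Θ_{l,a,b,r} : T (l ++ [a,b] ++ r) ⟶ T (l ++ [b,a] ++ r)`, defined by
`Θ_{[],a,b,[]} = β_{a,b}`, `Θ_{l,a,b,[]} = α ≫ (𝟙 ⊗ β) ≫ α⁻¹` for `l` nonempty, and
`Θ_{l,a,b,r++[c]} = Θ_{l,a,b,r} ⊗ 𝟙 c`. -/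
def Theta (l : List C) (a b : C) :
    (r : List C) → (T (l ++ [a, b] ++ r) ⟶ T (l ++ [b, a] ++ r)) := fun r =>
  r.reverseRecOn
    (match l with
      | [] => (β_ a b).hom
      | x :: l' =>
          eqToHom (by rw [List.append_nil]; exact T_concat2 x l' a b) ≫
            (α_ (T (x :: l')) a b).hom ≫ (𝟙 (T (x :: l')) ⊗ₘ (β_ a b).hom) ≫
            (α_ (T (x :: l')) b a).inv ≫
            eqToHom (by rw [List.append_nil]; exact (T_concat2 x l' b a).symm))
    (fun r' c ih =>
      eqToHom (by rw [← List.append_assoc]; exact T_concat' (by simp) c) ≫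
        (ih ⊗ₘ 𝟙 c) ≫
        eqToHom (by rw [← List.append_assoc]; exact (T_concat' (by simp) c).symm))

end BraidedPart

section MultifunctorPart

variable (C : Type u) [Category.{v} C] [MonoidalCategory C] [SymmetricCategory C]
variable (D : Type u') [Category.{v'} D] [MonoidalCategory D] [SymmetricCategory D]

/-- A multifunctor family from `C` to `D`: an object function `obj` together with maps
`app xs y : (T xs ⟶ y) → (T (xs.map obj) ⟶ obj y)` preserving identities,
multicomposition, and the braiding action transposing the two inputs of a binary
multimorphism.  This encodes a multifunctor between the underlying multicategories. -/
structure MultifunctorFamily where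
  obj : C → D
  app : ∀ (xs : List C) (y : C), (T xs ⟶ y) → (T (xs.map obj) ⟶ obj y)
  app_id : ∀ a : C, app [a] a (𝟙 a) = 𝟙 (obj a)
  app_comp : ∀ (z : C) (fs : List (MultiMor C)) (g : T (fs.map MultiMor.tgt) ⟶ z),
    app ((fs.map MultiMor.src).flatten) z (Gamma fs g) =
      eqToHom (congrArg T
          (by rw [List.map_flatten, List.map_map, List.map_map]; exact rfl)) ≫
        Gamma (fs.map fun m => MultiMor.mk (m.src.map obj) (obj m.tgt) (app m.src m.tgt m.hom))
          (eqToHom (congrArg T (by rw [List.map_map, List.map_map]; exact rfl)) ≫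
            app (fs.map MultiMor.tgt) z g)
  app_braiding : ∀ (a b y : C) (f : T [a, b] ⟶ y),
    app [b, a] y ((β_ b a).hom ≫ f) = (β_ (obj b) (obj a)).hom ≫ app [a, b] y f

end MultifunctorPart


variable {C : Type u} [Category.{v} C] [MonoidalCategory C] [SymmetricCategory C]
variable {D : Type u'} [Category.{v'} D] [MonoidalCategory D] [SymmetricCategory D]

section AuxLemmas
open Functor.LaxMonoidal

lemma xi_nil (F : C ⥤ D) [F.LaxMonoidal] : xi F [] = ε F := by
  unfold xi; exact List.reverseRecOn_nil _ _

lemma xi_singleton (F : C ⥤ D) [F.LaxMonoidal] (x : C) : xi F [x] = 𝟙 (F.obj x) := by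
  unfold xi; exact List.reverseRecOn_concat x [] _ _

lemma xi_concat (F : C ⥤ D) [F.LaxMonoidal] (x : C) (l : List C) (y : C) :
    xi F (x :: l ++ [y]) =
      eqToHom (by rw [List.map_cons, List.map_append]; exact T_concat' (by simp) (F.obj y)) ≫
        (xi F (x :: l) ⊗ₘ 𝟙 (F.obj y)) ≫ μ F (T (x :: l)) y ≫
        eqToHom (congrArg F.obj (T_concat x l y).symm) := by
  unfold xi; exact List.reverseRecOn_concat y (x :: l) _ _


lemma Theta_nil_nil (a b : C) : Theta [] a b [] = (β_ a b).hom := by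
  unfold Theta; exact List.reverseRecOn_nil _ _

lemma Theta_cons_nil (x : C) (l' : List C) (a b : C) :
    Theta (x :: l') a b [] =
      eqToHom (by rw [List.append_nil]; exact T_concat2 x l' a b) ≫
        (α_ (T (x :: l')) a b).hom ≫ (𝟙 (T (x :: l')) ⊗ₘ (β_ a b).hom) ≫
        (α_ (T (x :: l')) b a).inv ≫
        eqToHom (by rw [List.append_nil]; exact (T_concat2 x l' b a).symm) := by
  unfold Theta; exact List.reverseRecOn_nil _ _

lemma Theta_concat (l : List C) (a b : C) (r : List C) (c : C) :
    Theta l a b (r ++ [c]) =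
      eqToHom (by rw [← List.append_assoc]; exact T_concat' (by simp) c) ≫
        (Theta l a b r ⊗ₘ 𝟙 c) ≫
        eqToHom (by rw [← List.append_assoc]; exact (T_concat' (by simp) c).symm) := by
  unfold Theta; exact List.reverseRecOn_concat c r _ _

lemma xi_congr (F : C ⥤ D) [F.LaxMonoidal] {l l' : List C} (h : l = l') :
    xi F l = eqToHom (by rw [h]) ≫ xi F l' ≫ eqToHom (by rw [h]) := by
  subst h; simp

lemma Theta_congr {l l' : List C} (a b : C) {r r' : List C} (hl : l = l') (h : r = r') :
    Theta l a b r = eqToHom (by rw [hl, h]) ≫ Theta l' a b r' ≫ eqToHom (by rw [hl, h]) := by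
  subst hl h; simp

lemma xi_pair (F : C ⥤ D) [F.LaxMonoidal] (a b : C) : xi F [a, b] = μ F a b := by
  have h : xi F [a, b] =
      eqToHom (rfl : (F.obj a ⊗ F.obj b : D) = F.obj a ⊗ F.obj b) ≫
        (xi F [a] ⊗ₘ 𝟙 (F.obj b)) ≫ μ F a b ≫
        eqToHom (rfl : (F.obj (a ⊗ b) : D) = F.obj (a ⊗ b)) := xi_concat F a [] b
  rw [h, xi_singleton]; simp; rfl

lemma xi_concat' (F : C ⥤ D) [F.LaxMonoidal] {l : List C} (h : l ≠ []) (y : C) :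
    xi F (l ++ [y]) =
      eqToHom (by rw [List.map_append]; exact T_concat' (by simpa using h) (F.obj y)) ≫
        (xi F l ⊗ₘ 𝟙 (F.obj y)) ≫ μ F (T l) y ≫
        eqToHom (congrArg F.obj (T_concat' h y).symm) := by
  cases l with
  | nil => exact absurd rfl h
  | cons x l => exact xi_concat F x l y

lemma mu_eqToHom_left (F : C ⥤ D) [F.LaxMonoidal] {X Y : C} (h : X = Y) (c : C) :
    (eqToHom (show (F.obj X ⊗ F.obj c : D) = F.obj Y ⊗ F.obj c by rw [h])) ≫ μ F Y c =
      μ F X c ≫ eqToHom (by rw [h]) := by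
  subst h; simp

lemma key0 (F : C ⥤ D) [F.LaxBraided] (X a b : C) :
    (α_ (F.obj X) (F.obj a) (F.obj b)).hom ≫ (F.obj X ◁ (β_ (F.obj a) (F.obj b)).hom) ≫
      (α_ (F.obj X) (F.obj b) (F.obj a)).inv ≫ (μ F X b ▷ F.obj a) ≫ μ F (X ⊗ b) a =
    (μ F X a ▷ F.obj b) ≫ μ F (X ⊗ a) b ≫
      F.map ((α_ X a b).hom ≫ (X ◁ (β_ a b).hom) ≫ (α_ X b a).inv) := by
  simp only [Functor.map_comp]
  slice_rhs 1 3 => rw [Functor.LaxMonoidal.associativity]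
  slice_rhs 3 4 => rw [← Functor.LaxMonoidal.μ_natural_right]
  slice_rhs 2 3 => rw [← MonoidalCategory.whiskerLeft_comp, Functor.LaxBraided.braided,
    MonoidalCategory.whiskerLeft_comp]
  slice_rhs 3 5 => rw [Functor.LaxMonoidal.associativity_inv]


end AuxLemmas

/-- The iterated structure map `ξ` of a lax symmetric monoidal functor intertwines the
adjacent-swap coherence isomorphisms `Θ`:
`Θ_{l.map F, F a, F b, r.map F} ≫ ξ(l ++ [b,a] ++ r) = ξ(l ++ [a,b] ++ r) ≫ F(Θ_{l,a,b,r})`. -/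
theorem xi_compat_Theta (F : C ⥤ D) [F.LaxBraided] (l r : List C) (a b : C) :
    eqToHom (congrArg T (by simp)) ≫
        Theta (l.map F.obj) (F.obj a) (F.obj b) (r.map F.obj) ≫
        eqToHom (congrArg T (by simp)) ≫ xi F (l ++ [b, a] ++ r) =
      xi F (l ++ [a, b] ++ r) ≫ F.map (Theta l a b r) := by
  induction r using List.reverseRecOn with
  | nil =>
    cases l with
    | nil =>
      rw [Theta_congr (F.obj a) (F.obj b) (List.map_nil) (List.map_nil),
        Theta_nil_nil, Theta_nil_nil]
      show eqToHom (rfl : (F.obj a ⊗ F.obj b : D) = F.obj a ⊗ F.obj b) ≫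
          (eqToHom (rfl : (F.obj a ⊗ F.obj b : D) = F.obj a ⊗ F.obj b) ≫
            (β_ (F.obj a) (F.obj b)).hom ≫
            eqToHom (rfl : (F.obj b ⊗ F.obj a : D) = F.obj b ⊗ F.obj a)) ≫
          eqToHom (rfl : (F.obj b ⊗ F.obj a : D) = F.obj b ⊗ F.obj a) ≫ xi F [b, a] =
        xi F [a, b] ≫ F.map (β_ a b).hom
      rw [xi_pair, xi_pair]
      simp [Functor.LaxBraided.braided]
      erw [id_comp]; exact (Functor.LaxBraided.braided a b).symm
    | cons x l' =>
      rw [Theta_congr (F.obj a) (F.obj b) (List.map_cons (f := F.obj) (a := x) (l := l')) (List.map_nil),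
        Theta_cons_nil, Theta_cons_nil,
        xi_congr F (show (x :: l') ++ [b, a] ++ [] = ((x :: l') ++ [b]) ++ [a] by simp),
        xi_congr F (show (x :: l') ++ [a, b] ++ [] = ((x :: l') ++ [a]) ++ [b] by simp),
        xi_concat' F (show (x :: l') ++ [b] ≠ [] by simp) a,
        xi_concat' F (show (x :: l') ++ [a] ≠ [] by simp) b,
        xi_concat' F (show (x :: l') ≠ [] by simp) b,
        xi_concat' F (show (x :: l') ≠ [] by simp) a]
      simp only [tensorHom_id, id_tensorHom, comp_whiskerRight, eqToHom_whiskerRight,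
        whiskerLeft_eqToHom, eqToHom_trans, eqToHom_trans_assoc, eqToHom_refl, eqToHom_map,
        assoc, comp_id, id_comp, Functor.map_comp]
      rw [reassoc_of% mu_eqToHom_left F (T_concat x l' b).symm a,
        reassoc_of% mu_eqToHom_left F (T_concat x l' a).symm b]
      simp only [eqToHom_trans, eqToHom_trans_assoc, assoc]
      slice_lhs 4 5 => rw [← MonoidalCategory.associator_inv_naturality_left]
      slice_lhs 3 4 => rw [whisker_exchange]
      slice_lhs 2 3 => rw [← MonoidalCategory.associator_naturality_left]
      slice_lhs 3 7 => rw [key0]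
      simp only [Functor.map_comp, assoc, eqToHom_refl, id_comp, comp_id]
  | append_singleton r' c ih =>
    rw [Theta_congr (F.obj a) (F.obj b) rfl
          (show List.map F.obj (r' ++ [c]) = List.map F.obj r' ++ [F.obj c] by simp),
        Theta_concat,
        xi_congr F (show l ++ [b, a] ++ (r' ++ [c]) = (l ++ [b, a] ++ r') ++ [c] by simp),
        xi_congr F (show l ++ [a, b] ++ (r' ++ [c]) = (l ++ [a, b] ++ r') ++ [c] by simp),
        Theta_concat,
        xi_concat' F (show l ++ [b, a] ++ r' ≠ [] by simp) c,
        xi_concat' F (show l ++ [a, b] ++ r' ≠ [] by simp) c]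
    simp only [tensorHom_id, id_tensorHom, comp_whiskerRight, eqToHom_whiskerRight,
      eqToHom_trans, eqToHom_trans_assoc, eqToHom_refl, eqToHom_map, assoc, comp_id,
      id_comp, Functor.map_comp]
    have ih2 : Theta (List.map F.obj l) (F.obj a) (F.obj b) (List.map F.obj r') ≫
        eqToHom (congrArg T (by simp)) ≫ xi F (l ++ [b, a] ++ r') =
        eqToHom (congrArg T (by simp)) ≫ xi F (l ++ [a, b] ++ r') ≫
          F.map (Theta l a b r') := by
      rw [← ih]
      simp only [eqToHom_trans_assoc, eqToHom_refl, id_comp]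
    have ih3 : Theta (List.map F.obj l) (F.obj a) (F.obj b) (List.map F.obj r') ▷ F.obj c ≫
        eqToHom (show T (List.map F.obj l ++ [F.obj b, F.obj a] ++ List.map F.obj r') ⊗ F.obj c =
            T (List.map F.obj (l ++ [b, a] ++ r')) ⊗ F.obj c by simp) ≫
        xi F (l ++ [b, a] ++ r') ▷ F.obj c =
        eqToHom (show T (List.map F.obj l ++ [F.obj a, F.obj b] ++ List.map F.obj r') ⊗ F.obj c =
            T (List.map F.obj (l ++ [a, b] ++ r')) ⊗ F.obj c by simp) ≫
        xi F (l ++ [a, b] ++ r') ▷ F.obj c ≫ F.map (Theta l a b r') ▷ F.obj c := by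
      have h := congrArg (fun f => f ▷ F.obj c) ih2
      simpa [comp_whiskerRight, eqToHom_whiskerRight] using h
    rw [reassoc_of% ih3]
    rw [Functor.LaxMonoidal.μ_natural_left_assoc]
    simp


end Paper
end

section
/- Let 𝒜 be a symmetric monoidal category and xsss a list of lists of lists of objects of 𝒜. Then the regrouping isomorphisms are coherent with respect to double partitions: Φ(xsss.map List.join) ≫ Tmor(⟨Φ(xsss[s])⟩_s) = Φ(xsss.join) ≫ Φ(xsss.map (List.map T)), as morphisms T((xsss.join).join) ⟶ T(xsss.map (fun xss => T(xss.map T))), using the identifications (xsss.map List.join).join = (xsss.join).join and (xsss.map (List.map T)).join = (xsss.join).map T. -/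
open CategoryTheory Category MonoidalCategory

universe v v' v'' u u' u''

namespace Paper

variable {C : Type u} [Category.{v} C] [MonoidalCategory C]

variable {A : Type u} [Category.{v} A] [MonoidalCategory A] [SymmetricCategory A]

section Aux
set_option maxRecDepth 40000
variable {C : Type u} [Category.{v} C] [MonoidalCategory C]

@[simp] lemma eqToHom_tensorHom {a a' b b' : C} (h : a = a') (h' : b = b') :
    (eqToHom h ⊗ₘ eqToHom h') = eqToHom (by rw [h, h']) := by
  subst h; subst h'; simp [tensorHom_id]

lemma id_tensor_eqToHom {a b b' : C} (h : b = b') :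
    (𝟙 a ⊗ₘ eqToHom h) = eqToHom (by rw [h]) := by
  subst h; simp [tensorHom_id]

lemma eqToHom_tensor_id {a a' b : C} (h : a = a') :
    (eqToHom h ⊗ₘ 𝟙 b) = eqToHom (by rw [h]) := by
  subst h; simp [tensorHom_id]

@[simp] lemma eqToHom_whiskerRight' {a a' : C} (h : a = a') (b : C) :
    eqToHom h ▷ b = eqToHom (by rw [h]) := by subst h; simp

@[simp] lemma whiskerLeft_eqToHom' (a : C) {b b' : C} (h : b = b') :
    a ◁ eqToHom h = eqToHom (by rw [h]) := by subst h; simp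

lemma splitIso_nil_right (xs : List C) :
    splitIso xs [] = eqToIso (by rw [List.append_nil]) ≪≫ (ρ_ (T xs)).symm := by
  cases xs <;> rfl

lemma splitIso_nil_left (ys : List C) :
    (splitIso [] ys).hom = eqToHom (by simp) ≫ (λ_ (T ys)).inv := by
  cases ys with
  | nil => simp [splitIso_nil_right, unitors_inv_equal]; rfl
  | cons y ys' => simp [splitIso]

lemma splitIso_cons_singleton (x : C) (xs' : List C) (y : C) :
    (splitIso (x :: xs') [y]).hom = eqToHom (T_concat x xs' y) := by
  show (splitIsoAux x xs' ([] ++ [y])).hom = _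
  unfold splitIsoAux
  rw [List.reverseRecOn_concat]
  rfl

end Aux

section Aux2
variable {C : Type u} [Category.{v} C] [MonoidalCategory C]

lemma splitIso_congr {xs xs' ys ys' : List C} (h1 : xs = xs') (h2 : ys = ys') :
    (splitIso xs ys).hom =
      eqToHom (by rw [h1, h2]) ≫ (splitIso xs' ys').hom ≫ eqToHom (by rw [h1, h2]) := by
  subst h1; subst h2; simp

lemma Phi_congr {xss xss' : List (List C)} (h : xss = xss') :
    Phi xss = eqToHom (by rw [h]) ≫ Phi xss' ≫ eqToHom (by rw [h]) := by
  subst h; simp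

lemma Tmor_congr {fs fs' : List (Arrow C)} (h : fs = fs') :
    Tmor fs = eqToHom (by rw [h]) ≫ Tmor fs' ≫ eqToHom (by rw [h]) := by
  subst h; simp

lemma splitIso_cons_singleton_inv (x : C) (xs' : List C) (y : C) :
    (splitIso (x :: xs') [y]).inv = eqToHom (T_concat x xs' y).symm := by
  rw [show (splitIso (x :: xs') [y]) = eqToIso (T_concat x xs' y) by
    ext; rw [splitIso_cons_singleton]; simp]
  simp

/-- Uniform concat unfolding for `splitIso` with nonempty first list. -/
lemma splitIso_concat_hom (x : C) (xs' l : List C) (y : C) :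
    (splitIso (x :: xs') (l ++ [y])).hom =
      eqToHom (by rw [← List.append_assoc]; exact T_concat' (by simp) y) ≫
        ((splitIso (x :: xs') l).hom ⊗ₘ 𝟙 y) ≫ (α_ (T (x :: xs')) (T l) y).hom ≫
        (𝟙 (T (x :: xs')) ⊗ₘ (splitIso l [y]).inv) := by
  cases l with
  | nil =>
      show (splitIso (x :: xs') [y]).hom = _
      rw [splitIso_cons_singleton,
        show (splitIso ([] : List C) [y]).inv = (λ_ (T [y])).hom from rfl,
        splitIso_nil_right]
      simp only [Iso.trans_hom, eqToIso.hom, Iso.symm_hom, comp_tensor_id, assoc,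
        eqToHom_tensor_id, T_singleton, T_nil]
      simp [tensorHom_id, id_tensorHom]
  | cons a l' =>
      show (splitIsoAux x xs' ((a :: l') ++ [y])).hom = _
      unfold splitIsoAux
      rw [List.reverseRecOn_concat]
      show (eqToIso _ ≪≫ whiskerRightIso (splitIsoAux x xs' (a :: l')) y ≪≫
        α_ (T (x :: xs')) (T (a :: l')) y ≪≫
        whiskerLeftIso (T (x :: xs')) (eqToIso (T_concat a l' y).symm)).hom = _
      rw [splitIso_cons_singleton_inv]
      simp only [Iso.trans_hom, eqToIso.hom, whiskerRightIso_hom, whiskerLeftIso_hom,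
        tensorHom_id, id_tensorHom, assoc]
      rfl

lemma splitIso_singleton_inv' {xs : List C} (h : xs ≠ []) (y : C) :
    (splitIso xs [y]).inv = eqToHom (T_concat' h y).symm := by
  cases xs with
  | nil => exact absurd rfl h
  | cons x xs' => exact splitIso_cons_singleton_inv x xs' y

lemma splitIso_singleton_hom' {xs : List C} (h : xs ≠ []) (y : C) :
    (splitIso xs [y]).hom = eqToHom (T_concat' h y) := by
  cases xs with
  | nil => exact absurd rfl h
  | cons x xs' => exact splitIso_cons_singleton x xs' y

lemma splitIso_concat_hom' {xs : List C} (h : xs ≠ []) (l : List C) (y : C) :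
    (splitIso xs (l ++ [y])).hom =
      eqToHom (by rw [← List.append_assoc]; exact T_concat' (by simp [h]) y) ≫
        ((splitIso xs l).hom ⊗ₘ 𝟙 y) ≫ (α_ (T xs) (T l) y).hom ≫
        (𝟙 (T xs) ⊗ₘ (splitIso l [y]).inv) := by
  cases xs with
  | nil => exact absurd rfl h
  | cons x xs' => exact splitIso_concat_hom x xs' l y

end Aux2

section Aux3
set_option maxRecDepth 40000
variable {C : Type u} [Category.{v} C] [MonoidalCategory C]

lemma splitIso_assoc (xs ys zs : List C) :
    eqToHom (congrArg T (List.append_assoc xs ys zs)) ≫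
        (splitIso xs (ys ++ zs)).hom ≫ (𝟙 (T xs) ⊗ₘ (splitIso ys zs).hom) =
      (splitIso (xs ++ ys) zs).hom ≫ ((splitIso xs ys).hom ⊗ₘ 𝟙 (T zs)) ≫
        (α_ (T xs) (T ys) (T zs)).hom := by
  rcases xs with _ | ⟨x, xs'⟩
  · -- xs = []
    rw [splitIso_nil_left, splitIso_nil_left]
    show _ = (splitIso ys zs).hom ≫ _
    simp only [T_nil, List.nil_append, eqToHom_refl, comp_id, id_comp,
      tensorHom_id, id_tensorHom]
    rw [← leftUnitor_inv_naturality]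
    simp only [assoc, leftUnitor_tensor_inv]
  rcases ys with _ | ⟨y, ys'⟩
  · -- ys = []
    rw [splitIso_nil_left, splitIso_nil_right,
      splitIso_congr (show x :: xs' ++ [] = x :: xs' by simp) (rfl : zs = zs)]
    show eqToHom _ ≫ (splitIso (x :: xs') zs).hom ≫ _ = _
    simp only [List.append_nil, List.nil_append, eqToHom_refl, comp_id, id_comp,
      Iso.trans_hom, eqToIso.hom, Iso.symm_hom, T_nil, tensorHom_id, id_tensorHom]
    simp only [comp_whiskerRight, eqToHom_whiskerRight', whiskerLeft_eqToHom', assoc,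
      eqToHom_trans, eqToHom_trans_assoc, eqToHom_refl, id_comp, comp_id,
      triangle_assoc_comp_right_inv]
  · -- xs, ys nonempty : induction on zs
    induction zs using List.reverseRecOn with
    | nil =>
        rw [splitIso_nil_right, splitIso_nil_right,
          splitIso_congr (rfl : x :: xs' = x :: xs') (show y :: ys' ++ [] = y :: ys' by simp)]
        simp only [Iso.trans_hom, eqToIso.hom, Iso.symm_hom, tensorHom_id, id_tensorHom,
          MonoidalCategory.whiskerLeft_comp, whiskerLeft_eqToHom', eqToHom_whiskerRight',
          assoc, eqToHom_trans, eqToHom_trans_assoc, eqToHom_refl, id_comp, comp_id, T_nil]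
        rw [← rightUnitor_inv_naturality_assoc]
        simp only [rightUnitor_tensor_inv, assoc, Iso.inv_hom_id, Iso.inv_hom_id_assoc,
          comp_id, eqToHom_trans_assoc, eqToHom_trans, eqToHom_refl, id_comp]
    | append_singleton r c ih =>
        rw [splitIso_congr (rfl : x :: xs' = x :: xs')
            (show y :: ys' ++ (r ++ [c]) = (y :: ys' ++ r) ++ [c] by simp),
          splitIso_concat_hom' (show (x :: xs' : List C) ≠ [] by simp) (y :: ys' ++ r) c,
          splitIso_concat_hom' (show (y :: ys' : List C) ≠ [] by simp) r c,
          splitIso_concat_hom' (show (x :: xs' ++ y :: ys' : List C) ≠ [] by simp) r c,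
          splitIso_singleton_inv' (show (y :: ys' ++ r : List C) ≠ [] by simp) c]
        simp only [tensorHom_id, id_tensorHom,
          MonoidalCategory.whiskerLeft_comp, comp_whiskerRight,
          whiskerLeft_eqToHom', eqToHom_whiskerRight',
          assoc, eqToHom_trans, eqToHom_trans_assoc, eqToHom_refl, id_comp, comp_id]
        have ihc : (splitIso (x :: xs') (y :: ys' ++ r)).hom ≫
              T (x :: xs') ◁ (splitIso (y :: ys') r).hom =
            eqToHom (congrArg T (List.append_assoc (x :: xs') (y :: ys') r)).symm ≫
              (splitIso (x :: xs' ++ y :: ys') r).hom ≫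
              (splitIso (x :: xs') (y :: ys')).hom ▷ T r ≫
              (α_ (T (x :: xs')) (T (y :: ys')) (T r)).hom := by
          simp only [tensorHom_id, id_tensorHom] at ih
          rw [← ih]
          simp only [eqToHom_trans_assoc, eqToHom_refl, id_comp, assoc]
        rw [← associator_naturality_middle_assoc, ← comp_whiskerRight_assoc, ihc]
        simp only [comp_whiskerRight, eqToHom_whiskerRight', assoc]
        erw [id_tensorHom, id_tensorHom]
        rw [pentagon_assoc, associator_naturality_left_assoc]
        erw [whisker_exchange_assoc, associator_naturality_right]
        simp only [assoc, eqToHom_trans_assoc, eqToHom_refl, id_comp, eqToHom_trans]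

end Aux3

section Aux4
set_option maxRecDepth 40000
variable {C : Type u} [Category.{v} C] [MonoidalCategory C]

@[simp] lemma Phi_nil : Phi ([] : List (List C)) = 𝟙 (𝟙_ C) := by
  unfold Phi; erw [List.reverseRecOn_nil]

lemma Phi_concat (xss : List (List C)) (v : List C) :
    Phi (xss ++ [v]) =
      eqToHom (congrArg T (by simp)) ≫
        (splitIso xss.flatten v).hom ≫
        (Phi xss ⊗ₘ 𝟙 (T v)) ≫
        (splitIso (xss.map T) [T v]).inv ≫
        eqToHom (congrArg T (by simp)) := by
  unfold Phi
  erw [List.reverseRecOn_concat]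

@[simp] lemma Tmor_nil : Tmor ([] : List (Arrow C)) = 𝟙 (𝟙_ C) := by
  unfold Tmor; erw [List.reverseRecOn_nil]

lemma Tmor_concat (fs : List (Arrow C)) (f : Arrow C) :
    Tmor (fs ++ [f]) =
      eqToHom (congrArg T (by erw [List.map_append]; rfl)) ≫
        (splitIso (fs.map Comma.left) [f.left]).hom ≫
        (Tmor fs ⊗ₘ f.hom) ≫
        (splitIso (fs.map Comma.right) [f.right]).inv ≫
        eqToHom (congrArg T (by erw [List.map_append]; rfl)) := by
  cases fs with
  | nil =>
      show Tmor [f] = eqToHom _ ≫ (splitIso ([] : List C) [f.left]).hom ≫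
        (Tmor [] ⊗ₘ f.hom) ≫ (splitIso ([] : List C) [f.right]).inv ≫ eqToHom _
      rw [show (splitIso ([] : List C) [f.left]).hom = (λ_ (T [f.left])).inv from rfl,
        show (splitIso ([] : List C) [f.right]).inv = (λ_ (T [f.right])).hom from rfl]
      show Tmor ([] ++ [f]) = _
      unfold Tmor
      erw [List.reverseRecOn_concat, List.reverseRecOn_nil]
      show f.hom = _
      erw [id_tensorHom, ← leftUnitor_inv_naturality_assoc, Iso.inv_hom_id_assoc, eqToHom_refl,
        eqToHom_refl, id_comp, comp_id]
  | cons a l' =>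
      rw [splitIso_singleton_hom' (xs := (a :: l').map Comma.left) (List.cons_ne_nil _ _) f.left,
        splitIso_singleton_inv' (xs := (a :: l').map Comma.right) (List.cons_ne_nil _ _) f.right]
      show Tmor ((a :: l') ++ [f]) = _
      unfold Tmor
      erw [List.reverseRecOn_concat]
      show eqToHom _ ≫ ((Tmor (a :: l')) ⊗ₘ f.hom) ≫ eqToHom _ = _
      simp only [assoc, eqToHom_trans, eqToHom_trans_assoc, eqToHom_refl, id_comp, comp_id]
      erw [eqToHom_trans_assoc]
      rfl

end Aux4

section Aux5
set_option maxRecDepth 40000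
variable {C : Type u} [Category.{v} C] [MonoidalCategory C]

lemma splitIso_congr_inv {xs xs' ys ys' : List C} (h1 : xs = xs') (h2 : ys = ys') :
    (splitIso xs ys).inv =
      eqToHom (by rw [h1, h2]) ≫ (splitIso xs' ys').inv ≫ eqToHom (by rw [h1, h2]) := by
  subst h1; subst h2; simp

lemma splitIso_assoc_inv (xs ys zs : List C) :
    (α_ (T xs) (T ys) (T zs)).inv ≫ ((splitIso xs ys).inv ▷ T zs) ≫
        (splitIso (xs ++ ys) zs).inv =
      (T xs ◁ (splitIso ys zs).inv) ≫ (splitIso xs (ys ++ zs)).inv ≫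
        eqToHom (congrArg T (List.append_assoc xs ys zs).symm) := by
  have h := splitIso_assoc xs ys zs
  simp only [tensorHom_id, id_tensorHom] at h
  rw [← cancel_epi (T xs ◁ (splitIso ys zs).hom),
    ← cancel_epi ((splitIso xs (ys ++ zs)).hom),
    ← cancel_epi (eqToHom (congrArg T (List.append_assoc xs ys zs)))]
  slice_lhs 1 3 => rw [h]
  simp [← MonoidalCategory.whiskerLeft_comp, ← comp_whiskerRight]

lemma whiskerRight_obj_congr {X Y : C} (f : X ⟶ Y) {b b' : C} (h : b = b') :
    f ▷ b = eqToHom (by rw [h]) ≫ f ▷ b' ≫ eqToHom (by rw [h]) := by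
  subst h; simp

lemma eqToHom_prod {a a' b : C} (h1 : a = a') (h : a ⊗ b = a' ⊗ b) :
    eqToHom h = eqToHom h1 ⊗ₘ 𝟙 b := by
  subst h1; simp [tensorHom_id]

lemma Phi_append (xss yss : List (List C)) :
    Phi (xss ++ yss) =
      eqToHom (congrArg T (by simp)) ≫
        (splitIso xss.flatten yss.flatten).hom ≫
        (Phi xss ⊗ₘ Phi yss) ≫
        (splitIso (xss.map T) (yss.map T)).inv ≫
        eqToHom (congrArg T (List.map_append (f := T) (l₁ := xss) (l₂ := yss)).symm) := by
  induction yss using List.reverseRecOn with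
  | nil =>
      rw [Phi_congr (List.append_nil xss)]
      simp only [List.flatten_nil, List.map_nil, Phi_nil]
      erw [splitIso_nil_right, splitIso_nil_right]
      simp only [Iso.trans_hom, Iso.trans_inv, eqToIso.hom, eqToIso.inv, Iso.symm_hom,
        Iso.symm_inv, tensorHom_id, assoc, eqToHom_trans, eqToHom_trans_assoc, eqToHom_refl,
        id_comp, comp_id, T_nil, List.flatten_nil, List.map_nil, List.append_nil]
      erw [tensorHom_id, ← rightUnitor_inv_naturality_assoc]
      erw [assoc, Iso.inv_hom_id_assoc, eqToHom_trans]
  | append_singleton m v ih =>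
      rw [Phi_congr (List.append_assoc xss m [v]).symm, Phi_concat (xss ++ m) v, ih,
        Phi_concat m v,
        splitIso_congr (show (xss ++ m).flatten = xss.flatten ++ m.flatten by simp)
          (rfl : v = v),
        splitIso_congr_inv (List.map_append (f := T) (l₁ := xss) (l₂ := m)) (rfl : [T v] = [T v]),
        splitIso_congr (rfl : xss.flatten = xss.flatten)
          (show (m ++ [v]).flatten = m.flatten ++ v by simp),
        splitIso_congr_inv (rfl : List.map T xss = List.map T xss)
          (show List.map T (m ++ [v]) = List.map T m ++ [T v] by simp)]
      simp only [MonoidalCategory.tensorHom_def, comp_whiskerRight, MonoidalCategory.whiskerLeft_comp,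
        eqToHom_whiskerRight', whiskerLeft_eqToHom', T_singleton,
        MonoidalCategory.whiskerLeft_id, MonoidalCategory.id_whiskerRight,
        List.flatten_append, List.flatten_cons, List.flatten_nil, List.append_nil,
        assoc, eqToHom_trans, eqToHom_trans_assoc, eqToHom_refl, id_comp, comp_id]
      have h1 := splitIso_assoc xss.flatten m.flatten v
      simp only [tensorHom_id, id_tensorHom] at h1
      have h1' : (splitIso (xss.flatten ++ m.flatten) v).hom ≫
            (splitIso xss.flatten m.flatten).hom ▷ T v =
          eqToHom (congrArg T (List.append_assoc xss.flatten m.flatten v)) ≫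
            (splitIso xss.flatten (m.flatten ++ v)).hom ≫
            (T xss.flatten ◁ (splitIso m.flatten v).hom) ≫
            (α_ (T xss.flatten) (T m.flatten) (T v)).inv := by
        rw [← cancel_mono (α_ (T xss.flatten) (T m.flatten) (T v)).hom]
        simp only [assoc, Iso.inv_hom_id, comp_id]
        exact h1.symm
      have h1'' := reassoc_of% h1'
      rw [h1'']
      rw [← associator_inv_naturality_left_assoc, ← associator_inv_naturality_middle_assoc]
      have h2 := splitIso_assoc_inv (List.map T xss) (List.map T m) [T v]
      simp only [T_singleton] at h2
      have h2'' := reassoc_of% h2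
      erw [eqToHom_trans_assoc, eqToHom_trans_assoc, eqToHom_refl, id_comp]
      erw [h2'']
      rw [whiskerRight_obj_congr (Phi xss)
        (congrArg T (show (m ++ [v]).flatten = m.flatten ++ v by simp))]
      simp only [← whisker_exchange_assoc, ← whisker_exchange,
        assoc, eqToHom_trans, eqToHom_trans_assoc, eqToHom_refl, id_comp, comp_id]

end Aux5
set_option maxHeartbeats 4000000 in
/-- Coherence of the regrouping isomorphisms `Φ` with respect to double partitions:
`Φ(xsss.map join) ≫ Tmor ⟨Φ(xsss[s])⟩ = Φ(xsss.join) ≫ Φ(xsss.map (map T))`. -/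
theorem Phi_compat_double (xsss : List (List (List A))) :
    eqToHom (congrArg T (by rw [List.flatten_flatten])) ≫
        Phi (xsss.map List.flatten) ≫
        eqToHom (congrArg T (by erw [List.map_map, List.map_map]; exact rfl)) ≫
        Tmor (xsss.map fun xss => Arrow.mk (Phi xss)) ≫
        eqToHom (congrArg T
          (show (xsss.map fun xss => Arrow.mk (Phi xss)).map Comma.right =
              xsss.map (fun xss => T (xss.map T)) by
            erw [List.map_map]; exact rfl)) =
      Phi xsss.flatten ≫
        eqToHom (congrArg T (by rw [List.map_flatten])) ≫
        Phi (xsss.map (List.map T)) ≫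
        eqToHom (congrArg T
          (show (xsss.map (List.map T)).map T = xsss.map (fun xss => T (xss.map T)) by
            rw [List.map_map]; exact rfl)) := by
  induction xsss using List.reverseRecOn with
  | nil =>
      simp only [List.map_nil, List.flatten_nil, Phi_nil, Tmor_nil, eqToHom_refl,
        comp_id, id_comp]
      show Phi ([] : List (List A)) ≫ Tmor ([] : List (Arrow A)) = 𝟙 (𝟙_ A) ≫ Phi ([] : List (List A))
      simp
      rfl
  | append_singleton l v ih =>
      erw [Phi_congr (show List.map List.flatten (l ++ [v])
            = List.map List.flatten l ++ [v.flatten] by simp),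
        Tmor_congr (show List.map (fun xss => Arrow.mk (Phi xss)) (l ++ [v])
            = List.map (fun xss => Arrow.mk (Phi xss)) l ++ [Arrow.mk (Phi v)] by simp),
        Phi_congr (show (l ++ [v]).flatten = l.flatten ++ v by simp),
        Phi_congr (show List.map (List.map T) (l ++ [v])
            = List.map (List.map T) l ++ [List.map T v] by simp),
        Phi_concat (l.map List.flatten) v.flatten,
        Tmor_concat (l.map fun xss => Arrow.mk (Phi xss)) (Arrow.mk (Phi v)),
        Phi_append l.flatten v,
        Phi_concat (l.map (List.map T)) (v.map T),
        splitIso_congr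
          (show List.map Comma.left (List.map (fun xss => Arrow.mk (Phi xss)) l)
              = List.map (fun xss => T xss.flatten) l by erw [List.map_map]; rfl)
          (rfl : [(Arrow.mk (Phi v)).left] = [(Arrow.mk (Phi v)).left]),
        splitIso_congr_inv
          (show List.map T (List.map List.flatten l)
              = List.map (fun xss => T xss.flatten) l by rw [List.map_map]; rfl)
          (rfl : [T v.flatten] = [T v.flatten]),
        splitIso_congr_inv
          (show List.map Comma.right (List.map (fun xss => Arrow.mk (Phi xss)) l)
              = List.map (fun xss => T (List.map T xss)) l by erw [List.map_map]; rfl)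
          (rfl : [(Arrow.mk (Phi v)).right] = [(Arrow.mk (Phi v)).right]),
        splitIso_congr
          (show l.flatten.flatten = (List.map List.flatten l).flatten from
            List.flatten_flatten)
          (rfl : v.flatten = v.flatten),
        splitIso_congr_inv
          (show List.map T l.flatten = (List.map (List.map T) l).flatten from
            List.map_flatten (f := T) (L := l))
          (rfl : List.map T v = List.map T v),
        splitIso_congr_inv
          (show List.map T (List.map (List.map T) l)
              = List.map (fun xss => T (List.map T xss)) l by rw [List.map_map]; rfl)
          (rfl : [T (List.map T v)] = [T (List.map T v)])]
      repeat erw [assoc]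
      repeat erw [eqToHom_trans_assoc]
      repeat erw [eqToHom_trans]
      have key : ∀ {X Y Z : A} (i : X ≅ Y) (p : X = X) (h : Y ⟶ Z),
          i.inv ≫ eqToHom p ≫ i.hom ≫ h = h := by
        intro X Y Z i p h; simp
      erw [key, key]
      repeat erw [eqToHom_trans_assoc]
      erw [eqToHom_prod (congrArg T (show List.map T (List.map List.flatten l)
            = List.map Comma.left (List.map (fun xss => Arrow.mk (Phi xss)) l)
            by erw [List.map_map, List.map_map]; rfl)),
        eqToHom_prod (congrArg T (show List.map Comma.right
              (List.map (fun xss => Arrow.mk (Phi xss)) l)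
            = List.map (fun xss => T (List.map T xss)) l by erw [List.map_map]; rfl)),
        eqToHom_prod (congrArg T (show (List.map List.flatten l).flatten
            = l.flatten.flatten from List.flatten_flatten.symm)),
        eqToHom_prod (congrArg T (show List.map T l.flatten
            = (List.map (List.map T) l).flatten from List.map_flatten (f := T) (L := l))),
        eqToHom_prod (congrArg T (show List.map T (List.map (List.map T) l)
            = List.map (fun xss => T (List.map T xss)) l by rw [List.map_map]; rfl))]
      repeat erw [MonoidalCategory.tensorHom_comp_tensorHom_assoc]
      simp only [assoc, id_comp, comp_id]
      have hmain : Phi (List.map List.flatten l) ≫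
            eqToHom (congrArg T (show List.map T (List.map List.flatten l)
              = List.map Comma.left (List.map (fun xss => Arrow.mk (Phi xss)) l)
              by erw [List.map_map, List.map_map]; rfl)) ≫
            Tmor (List.map (fun xss => Arrow.mk (Phi xss)) l) ≫
            eqToHom (congrArg T (show List.map Comma.right
                (List.map (fun xss => Arrow.mk (Phi xss)) l)
              = List.map (fun xss => T (List.map T xss)) l by erw [List.map_map]; rfl)) =
          eqToHom (congrArg T (show (List.map List.flatten l).flatten
              = l.flatten.flatten from List.flatten_flatten.symm)) ≫
            Phi l.flatten ≫
            eqToHom (congrArg T (show List.map T l.flatten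
              = (List.map (List.map T) l).flatten from List.map_flatten (f := T) (L := l))) ≫
            Phi (List.map (List.map T) l) ≫
            eqToHom (congrArg T (show List.map T (List.map (List.map T) l)
              = List.map (fun xss => T (List.map T xss)) l by rw [List.map_map]; rfl)) := by
        rw [← cancel_epi (eqToHom (congrArg T (show l.flatten.flatten
          = (List.map List.flatten l).flatten from List.flatten_flatten)))]
        simp only [eqToHom_trans_assoc, eqToHom_refl, id_comp]
        exact ih
      erw [assoc, assoc, hmain]
      rfl

end Paper
end

section
/- Let (F₀, F) be a multifunctor family from 𝒞 to 𝒟, with derived data η := F_{[],𝟙}(𝟙_{𝟙_𝒞}) and ξ_{a,b} := F_{[a,b],a⊗b}(𝟙_{a⊗b}). Then for all objects a, b, c of 𝒞 the associativity coherence diagram commutes: (ξ_{a,b} ⊗ 𝟙_{F₀(c)}) ≫ ξ_{a⊗b,c} ≫ F_{[(a⊗b)⊗c],a⊗(b⊗c)}(α_{a,b,c}) = α_{F₀(a),F₀(b),F₀(c)} ≫ (𝟙_{F₀(a)} ⊗ ξ_{b,c}) ≫ ξ_{a,b⊗c}, as morphisms (F₀(a) ⊗ F₀(b)) ⊗ F₀(c)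 ⟶ F₀(a ⊗ (b ⊗ c)). -/
open CategoryTheory Category MonoidalCategory

universe v v' v'' u u' u''

namespace Paper

variable {C : Type u} [Category.{v} C] [MonoidalCategory C]

variable {C : Type u} [Category.{v} C] [MonoidalCategory C] [SymmetricCategory C]
variable {D : Type u'} [Category.{v'} D] [MonoidalCategory D] [SymmetricCategory D]

lemma reverseRecOn_singleton {α : Type*} {motive : List α → Sort*} (x : α) (nil : motive [])
    (app : ∀ (l : List α) (a : α), motive l → motive (l ++ [a])) :
    List.reverseRecOn (motive := motive) [x] nil app = app [] x nil := by
  show List.reverseRecOn (motive := motive) ([] ++ [x]) nil app = app [] x nil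
  rw [List.reverseRecOn_concat, List.reverseRecOn_nil]

lemma reverseRecOn_pair {α : Type*} {motive : List α → Sort*} (x y : α) (nil : motive [])
    (app : ∀ (l : List α) (a : α), motive l → motive (l ++ [a])) :
    List.reverseRecOn (motive := motive) [x, y] nil app = app [x] y (app [] x nil) := by
  show List.reverseRecOn (motive := motive) ([x] ++ [y]) nil app = app [x] y (app [] x nil)
  rw [List.reverseRecOn_concat, reverseRecOn_singleton]

section ComputeLemmas
variable {E : Type u} [Category.{v} E] [MonoidalCategory E]
lemma splitIso_nil_cons (y : E) (ys : List E) : splitIso [] (y :: ys) = (λ_ (T (y :: ys))).symm := rfl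
lemma splitIso_cons_single (x : E) (xs : List E) (y : E) :
    splitIso (x :: xs) [y] = eqToIso (T_concat x xs y) := by
  show splitIsoAux x xs [y] = _
  unfold splitIsoAux
  erw [reverseRecOn_singleton]
  rfl
lemma splitIso_cons_pair (x : E) (xs : List E) (y z : E) :
    splitIso (x :: xs) [y, z] = eqToIso (by
        rw [show x :: xs ++ [y, z] = (x :: xs ++ [y]) ++ [z] by simp]; exact T_concat' (by simp) z) ≪≫
            whiskerRightIso (eqToIso (T_concat x xs y)) z ≪≫ α_ (T (x :: xs)) (T [y]) z ≪≫
            whiskerLeftIso (T (x :: xs)) (eqToIso (T_concat y [] z).symm) := by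
  show splitIsoAux x xs [y, z] = _
  unfold splitIsoAux
  erw [reverseRecOn_pair]
  rfl
lemma Phi_pair_single (a b c : E) : Phi ([[a,b],[c]] : List (List E)) = 𝟙 (T [a,b,c]) := by
  unfold Phi
  erw [reverseRecOn_pair]
  erw [splitIso_cons_single a [b] c, splitIso_cons_single (T [a, b]) [] (T [c])]
  show 𝟙 ((a ⊗ b) ⊗ c) ≫ 𝟙 ((a ⊗ b) ⊗ c) ≫ ((𝟙 (a ⊗ b) ≫ (λ_ (a ⊗ b)).inv ≫
    (𝟙 (𝟙_ E) ⊗ₘ 𝟙 (a ⊗ b)) ≫ (λ_ (a ⊗ b)).hom ≫ 𝟙 (a ⊗ b)) ⊗ₘ 𝟙 c) ≫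
    𝟙 ((a ⊗ b) ⊗ c) ≫ 𝟙 ((a ⊗ b) ⊗ c) = 𝟙 ((a ⊗ b) ⊗ c)
  simp
lemma Phi_single_pair (a b c : E) : Phi ([[a],[b,c]] : List (List E)) = (α_ a b c).hom := by
  unfold Phi
  erw [reverseRecOn_pair]
  erw [splitIso_cons_pair a [] b c, splitIso_cons_single (T [a]) [] (T [b, c])]
  show 𝟙 ((a ⊗ b) ⊗ c) ≫ (𝟙 ((a ⊗ b) ⊗ c) ≫ (𝟙 (a ⊗ b) ▷ c) ≫ (α_ a b c).hom ≫ (a ◁ 𝟙 (b ⊗ c))) ≫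
    ((𝟙 a ≫ (λ_ a).inv ≫ (𝟙 (𝟙_ E) ⊗ₘ 𝟙 a) ≫ (λ_ a).hom ≫ 𝟙 a) ⊗ₘ 𝟙 (b ⊗ c)) ≫
    𝟙 (a ⊗ (b ⊗ c)) ≫ 𝟙 (a ⊗ (b ⊗ c)) = (α_ a b c).hom
  simp
lemma Phi_one_pair (x y : E) : Phi ([[x,y]] : List (List E)) = 𝟙 (T [x,y]) := by
  unfold Phi
  erw [reverseRecOn_singleton]
  show 𝟙 (x ⊗ y) ≫ (λ_ (x ⊗ y)).inv ≫ (𝟙 (𝟙_ E) ⊗ₘ 𝟙 (x ⊗ y)) ≫ (λ_ (x ⊗ y)).hom ≫ 𝟙 (x ⊗ y) =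
    𝟙 (x ⊗ y)
  simp
lemma Tmor_two {X X' Y Y' : E} (f : X ⟶ X') (g : Y ⟶ Y') :
    Tmor [Arrow.mk f, Arrow.mk g] = (f ⊗ₘ g) := by
  unfold Tmor
  erw [reverseRecOn_pair]
  show 𝟙 (X ⊗ Y) ≫ (f ⊗ₘ g) ≫ 𝟙 (X' ⊗ Y') = f ⊗ₘ g
  simp
lemma T_pair (x y : E) : T [x, y] = x ⊗ y := rfl
lemma T_triple (x y z : E) : T [x, y, z] = (x ⊗ y) ⊗ z := rfl
lemma Tmor_one {X X' : E} (f : X ⟶ X') : Tmor [Arrow.mk f] = f := by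
  unfold Tmor
  erw [reverseRecOn_singleton]
  rfl
end ComputeLemmas
/-- The associativity coherence diagram for the derived data `ξ` of a multifunctor
family: `(ξ_{a,b} ⊗ 𝟙) ≫ ξ_{a⊗b,c} ≫ F(α) = α ≫ (𝟙 ⊗ ξ_{b,c}) ≫ ξ_{a,b⊗c}`. -/
theorem multifunctorFamily_associativity (P : MultifunctorFamily C D) (a b c : C) :
    (P.app [a, b] (a ⊗ b) (𝟙 (a ⊗ b)) ⊗ₘ 𝟙 (P.obj c)) ≫
        P.app [a ⊗ b, c] ((a ⊗ b) ⊗ c) (𝟙 ((a ⊗ b) ⊗ c)) ≫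
        P.app [(a ⊗ b) ⊗ c] (a ⊗ (b ⊗ c)) (α_ a b c).hom =
      (α_ (P.obj a) (P.obj b) (P.obj c)).hom ≫
        (𝟙 (P.obj a) ⊗ₘ P.app [b, c] (b ⊗ c) (𝟙 (b ⊗ c))) ≫
        P.app [a, b ⊗ c] (a ⊗ (b ⊗ c)) (𝟙 (a ⊗ (b ⊗ c))) := by
  have e1 : P.app [a, b, c] (a ⊗ (b ⊗ c))
      (Phi [[a, b], [c]] ≫ 𝟙 ((a ⊗ b) ⊗ c) ≫ Tmor [Arrow.mk (𝟙 (a ⊗ b)), Arrow.mk (𝟙 c)] ≫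
        𝟙 ((a ⊗ b) ⊗ c) ≫ (α_ a b c).hom) =
      𝟙 ((P.obj a ⊗ P.obj b) ⊗ P.obj c) ≫ Phi [[P.obj a, P.obj b], [P.obj c]] ≫
        𝟙 ((P.obj a ⊗ P.obj b) ⊗ P.obj c) ≫
        Tmor [Arrow.mk (P.app [a, b] (a ⊗ b) (𝟙 (a ⊗ b))), Arrow.mk (P.app [c] c (𝟙 c))] ≫
        𝟙 (P.obj (a ⊗ b) ⊗ P.obj c) ≫ 𝟙 (P.obj (a ⊗ b) ⊗ P.obj c) ≫ P.app [a ⊗ b, c] (a ⊗ (b ⊗ c)) (α_ a b c).hom := P.app_comp (a ⊗ (b ⊗ c))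
      [MultiMor.mk [a, b] (a ⊗ b) (𝟙 (a ⊗ b)), MultiMor.mk [c] c (𝟙 c)] (α_ a b c).hom
  have e2 : P.app [a ⊗ b, c] (a ⊗ (b ⊗ c))
      (Phi [[a ⊗ b, c]] ≫ 𝟙 ((a ⊗ b) ⊗ c) ≫ Tmor [Arrow.mk (𝟙 ((a ⊗ b) ⊗ c))] ≫
        𝟙 ((a ⊗ b) ⊗ c) ≫ (α_ a b c).hom) =
      𝟙 (P.obj (a ⊗ b) ⊗ P.obj c) ≫ Phi [[P.obj (a ⊗ b), P.obj c]] ≫ 𝟙 (P.obj (a ⊗ b) ⊗ P.obj c) ≫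
        Tmor [Arrow.mk (P.app [a ⊗ b, c] ((a ⊗ b) ⊗ c) (𝟙 ((a ⊗ b) ⊗ c)))] ≫
        𝟙 (P.obj ((a ⊗ b) ⊗ c)) ≫ 𝟙 (P.obj ((a ⊗ b) ⊗ c)) ≫ P.app [(a ⊗ b) ⊗ c] (a ⊗ (b ⊗ c)) (α_ a b c).hom := P.app_comp (a ⊗ (b ⊗ c))
      [MultiMor.mk [a ⊗ b, c] ((a ⊗ b) ⊗ c) (𝟙 ((a ⊗ b) ⊗ c))] (α_ a b c).hom
  have e3 : P.app [a, b, c] (a ⊗ (b ⊗ c))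
      (Phi [[a], [b, c]] ≫ 𝟙 (a ⊗ (b ⊗ c)) ≫ Tmor [Arrow.mk (𝟙 a), Arrow.mk (𝟙 (b ⊗ c))] ≫
        𝟙 (a ⊗ (b ⊗ c)) ≫ 𝟙 (a ⊗ (b ⊗ c))) =
      𝟙 ((P.obj a ⊗ P.obj b) ⊗ P.obj c) ≫ Phi [[P.obj a], [P.obj b, P.obj c]] ≫
        𝟙 (P.obj a ⊗ (P.obj b ⊗ P.obj c)) ≫
        Tmor [Arrow.mk (P.app [a] a (𝟙 a)), Arrow.mk (P.app [b, c] (b ⊗ c) (𝟙 (b ⊗ c)))] ≫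
        𝟙 (P.obj a ⊗ P.obj (b ⊗ c)) ≫ 𝟙 (P.obj a ⊗ P.obj (b ⊗ c)) ≫ P.app [a, b ⊗ c] (a ⊗ (b ⊗ c)) (𝟙 (a ⊗ (b ⊗ c))) := P.app_comp (a ⊗ (b ⊗ c))
      [MultiMor.mk [a] a (𝟙 a), MultiMor.mk [b, c] (b ⊗ c) (𝟙 (b ⊗ c))] (𝟙 (a ⊗ (b ⊗ c)))
  simp only [Gamma, List.map_cons, List.map_nil, List.flatten, List.append_nil,
    List.nil_append, List.cons_append, List.singleton_append, List.append_assoc,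
    Phi_pair_single, Phi_single_pair, Phi_one_pair, T_pair, T_triple, T_singleton,
    Tmor_two, Tmor_one, Arrow.mk_left, Arrow.mk_right, P.app_id, eqToHom_refl,
    id_comp, comp_id, id_tensorHom_id] at e1 e2 e3
  erw [id_comp, id_comp, id_comp, id_comp, id_comp, id_comp, id_comp, id_comp] at e1
  erw [id_comp, id_comp, id_comp, id_comp, id_comp, id_comp, id_comp, id_comp] at e2
  erw [id_comp, id_comp, id_comp, id_comp, id_comp, id_comp, comp_id] at e3
  erw [← e2, ← e1]
  exact e3

end Paper
end

section
/- Let (F₀, F) be a multifunctor family from 𝒞 to 𝒟, with derived data ξ_{a,b} := F_{[a,b],a⊗b}(𝟙_{a⊗b}). Then for all objects a, b of 𝒞 the braiding coherence diagram commutes: β_{F₀(b),F₀(a)} ≫ ξ_{a,b} = ξ_{b,a} ≫ F_{[b⊗a],a⊗b}(β_{b,a}), as morphisms F₀(b) ⊗ F₀(a) ⟶ F₀(a ⊗ b). -/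
open CategoryTheory Category MonoidalCategory

universe v v' v'' u u' u''

namespace Paper

variable {C : Type u} [Category.{v} C] [MonoidalCategory C]

variable {C : Type u} [Category.{v} C] [MonoidalCategory C] [SymmetricCategory C]
variable {D : Type u'} [Category.{v'} D] [MonoidalCategory D] [SymmetricCategory D]


set_option linter.unusedSectionVars false in
lemma Phi_single (x : C) (l : List C) :
    Phi [x :: l] = eqToHom (show T ([x :: l].flatten) = T ([x :: l].map T) by simp) := by
  show Phi (([] : List (List C)) ++ [x :: l]) = _
  simp only [Phi]
  erw [List.reverseRecOn_concat, List.reverseRecOn_nil]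
  show eqToHom _ ≫ (splitIso [] (x :: l)).hom ≫ (𝟙 (𝟙_ C) ⊗ₘ 𝟙 (T (x :: l))) ≫
    (splitIso [] [T (x :: l)]).inv ≫ eqToHom _ = _
  simp [splitIso]

set_option linter.unusedSectionVars false in
lemma Tmor_single (f : Arrow C) : Tmor [f] = f.hom := by
  show Tmor (([] : List (Arrow C)) ++ [f]) = f.hom
  simp only [Tmor]
  erw [List.reverseRecOn_concat]

set_option linter.unusedSectionVars false in
lemma Gamma_single (x : C) (l : List C) (y z : C) (f : T (x :: l) ⟶ y) (g : T [y] ⟶ z) :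
    Gamma [MultiMor.mk (x :: l) y f] g =
      eqToHom (show T (([MultiMor.mk (x :: l) y f].map MultiMor.src).flatten) = T (x :: l) by simp) ≫
        f ≫ g := by
  simp only [Gamma, List.map_cons, List.map_nil, Phi_single, Tmor_single]
  show Phi [x :: l] ≫ eqToHom _ ≫ Tmor [Arrow.mk f] ≫ eqToHom _ ≫ g = _
  rw [Phi_single, Tmor_single]
  simp
  erw [eqToHom_refl, id_comp]
  rfl

/-- The braiding coherence diagram for the derived data `ξ` of a multifunctor family:
`β_{F₀ b, F₀ a} ≫ ξ_{a,b} = ξ_{b,a} ≫ F(β_{b,a})`. -/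
theorem multifunctorFamily_braided (P : MultifunctorFamily C D) (a b : C) :
    (β_ (P.obj b) (P.obj a)).hom ≫ P.app [a, b] (a ⊗ b) (𝟙 (a ⊗ b)) =
      P.app [b, a] (b ⊗ a) (𝟙 (b ⊗ a)) ≫ P.app [b ⊗ a] (a ⊗ b) (β_ b a).hom := by
  have hb := P.app_braiding a b (a ⊗ b) (𝟙 (a ⊗ b))
  erw [comp_id] at hb
  rw [← hb]
  have hc := P.app_comp (a ⊗ b) [MultiMor.mk [b, a] (b ⊗ a) (𝟙 (b ⊗ a))] ((β_ b a).hom)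
  erw [Gamma_single] at hc
  erw [Gamma_single] at hc
  simp only [id_comp, eqToHom_refl] at hc
  have e : @CategoryStruct.comp C _ (T [b, a]) (b ⊗ a) (a ⊗ b) (𝟙 (b ⊗ a)) (β_ b a).hom
      = (β_ b a).hom := id_comp _
  rw [e] at hc
  exact hc

end Paper
end
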